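/- arXiv:2202.08955 — 2 statements merged into one kernel-verified Lean document; each statement's English description precedes it below -/
import Mathlib

section
/- Under the assumptions of the previous two facts (α > β > 0, p̂ₙ the largest entry of p̂, and p̃ₙ = exp(−L/α)·p̂ₙ^(1−β/α) where L = α·KL(p̂‖p̃) + β·H(p̂)), it follows that p̃ₙ ≤ p̂ₙ. -/
open Real Finset

theorem stmt2 (N : ℕ) (phat ptil : Fin N → ℝ)
    (hphat_pos : ∀ j, 0 < phat j) (hptil_pos : ∀ j, 0 < ptil j)
    (hphat_sum : ∑ j, phat j = 1) (hptil_sum : ∑ j, ptil j = 1)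
    (n : Fin N) (hmax : ∀ j, phat j ≤ phat n)
    (α β : ℝ) (hβ : 0 < β) (hαβ : β < α)
    (L : ℝ)
    (hL : L = α * (∑ j, phat j * (Real.log (phat j) - Real.log (ptil j)))
            + β * (-(∑ j, phat j * Real.log (phat j))))
    (hrel : ptil n = Real.exp (-(L / α)) * (phat n) ^ (1 - β / α)) :
    ptil n ≤ phat n := by
  have hα : 0 < α := hβ.trans hαβ
  -- Gibbs: KL ≥ 0
  have hKL : 0 ≤ ∑ j, phat j * (Real.log (phat j) - Real.log (ptil j)) := by
    have key : ∑ j, phat j * (Real.log (ptil j) - Real.log (phat j)) ≤ 0 := by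
      have h1 : ∀ j : Fin N, phat j * (Real.log (ptil j) - Real.log (phat j))
          ≤ ptil j - phat j := by
        intro j
        have hlog : Real.log (ptil j) - Real.log (phat j)
            = Real.log (ptil j / phat j) := by
          rw [Real.log_div (hptil_pos j).ne' (hphat_pos j).ne']
        rw [hlog]
        have hle : Real.log (ptil j / phat j) ≤ ptil j / phat j - 1 :=
          Real.log_le_sub_one_of_pos (div_pos (hptil_pos j) (hphat_pos j))
        calc phat j * Real.log (ptil j / phat j)
            ≤ phat j * (ptil j / phat j - 1) :=
              mul_le_mul_of_nonneg_left hle (hphat_pos j).le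
          _ = ptil j - phat j := by
              rw [mul_sub, mul_one, mul_div_cancel₀ _ (hphat_pos j).ne']
      calc ∑ j, phat j * (Real.log (ptil j) - Real.log (phat j))
          ≤ ∑ j, (ptil j - phat j) := Finset.sum_le_sum fun j _ => h1 j
        _ = 0 := by rw [Finset.sum_sub_distrib, hphat_sum, hptil_sum]; ring
    have : ∑ j, phat j * (Real.log (phat j) - Real.log (ptil j))
        = -(∑ j, phat j * (Real.log (ptil j) - Real.log (phat j))) := by
      rw [← Finset.sum_neg_distrib]; apply Finset.sum_congr rfl; intro j _; ring
    rw [this]; linarith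
  -- Entropy bound: -∑ p log p ≥ -log pₙ
  have hH : -Real.log (phat n) ≤ -(∑ j, phat j * Real.log (phat j)) := by
    have h2 : ∑ j, phat j * Real.log (phat j) ≤ ∑ j, phat j * Real.log (phat n) :=
      Finset.sum_le_sum fun j _ =>
        mul_le_mul_of_nonneg_left
          (Real.log_le_log (hphat_pos j) (hmax j)) (hphat_pos j).le
    have h3 : ∑ j, phat j * Real.log (phat n) = Real.log (phat n) := by
      rw [← Finset.sum_mul, hphat_sum, one_mul]
    linarith
  have hLlb : 0 ≤ L + β * Real.log (phat n) := by
    have := mul_le_mul_of_nonneg_left hH hβ.le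
    nlinarith
  have hpn := hphat_pos n
  have hrw : ptil n = Real.exp (-(L / α) + (1 - β / α) * Real.log (phat n)) := by
    rw [hrel, Real.exp_add, Real.rpow_def_of_pos hpn, mul_comm (Real.log (phat n))]
  rw [hrw]
  have hle : -(L / α) + (1 - β / α) * Real.log (phat n) ≤ Real.log (phat n) := by
    rw [← sub_nonneg]
    have : Real.log (phat n) - (-(L / α) + (1 - β / α) * Real.log (phat n))
        = (L + β * Real.log (phat n)) / α := by field_simp; ring
    rw [this]
    exact div_nonneg hLlb hα.le
  calc Real.exp (-(L / α) + (1 - β / α) * Real.log (phat n))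
      ≤ Real.exp (Real.log (phat n)) := Real.exp_le_exp.mpr hle
    _ = phat n := Real.exp_log hpn
end

section
/- Fix f ∈ ℝ^D, a matrix W ∈ ℝ^{D×N} with columns w₁,…,w_N, a probability vector p̃ with positive entries, and constants α > β > 0. Define p̂ = σ(Wᵀf) and L = (α−β)·Σⱼ p̂ⱼ log p̂ⱼ − α·Σⱼ p̂ⱼ log p̃ⱼ. Then the gradient of L with respect to wₙ equals [(α−β)·log p̂ₙ − α·log p̃ₙ − L] · p̂ₙ · f. -/
/-!
Only the logit `yₙ = wₙᵀf` depends on the entry `W n d`, with slope `f d`. The softmax Jacobian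
`∂p̂ⱼ/∂yᵢ = p̂ⱼ (δᵢⱼ - p̂ᵢ)` gives `∂/∂yₙ Σⱼ p̂ⱼ gⱼ = p̂ₙ (gₙ - Σⱼ p̂ⱼ gⱼ)` for fixed weights `g`, and the
entropy term behaves as if `g = log p̂` were fixed, since `Σⱼ p̂ⱼ ∂(log p̂ⱼ) = ∂(Σⱼ p̂ⱼ) = 0`. With
`g = (α - β) log p̂ - α log p̃` the mean `Σⱼ p̂ⱼ gⱼ` is `L` itself.
-/

open Real Finset

noncomputable def softmax (N : ℕ) (y : Fin N → ℝ) (i : Fin N) : ℝ :=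
  Real.exp (y i) / ∑ j, Real.exp (y j)

/-- The network prediction `p̂ = σ(Wᵀf)`, where `W n` is the `n`-th column `wₙ ∈ ℝ^D`. -/
noncomputable def phat (D N : ℕ) (f : Fin D → ℝ) (W : Fin N → Fin D → ℝ) : Fin N → ℝ :=
  softmax N (fun i => ∑ d, W i d * f d)

/-- The D2 loss `L = (α−β)·Σⱼ p̂ⱼ log p̂ⱼ − α·Σⱼ p̂ⱼ log p̃ⱼ` as a function of `W`. -/
noncomputable def D2Loss (D N : ℕ) (α β : ℝ) (f : Fin D → ℝ) (ptil : Fin N → ℝ)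
    (W : Fin N → Fin D → ℝ) : ℝ :=
  (α - β) * ∑ j, phat D N f W j * Real.log (phat D N f W j)
    - α * ∑ j, phat D N f W j * Real.log (ptil j)

section Softmax

variable {N : ℕ} [NeZero N]

lemma sum_exp_pos (y : Fin N → ℝ) : 0 < ∑ j, exp (y j) :=
  Finset.sum_pos (fun j _ => exp_pos (y j)) univ_nonempty

lemma sum_softmax (y : Fin N → ℝ) : ∑ i, softmax N y i = 1 := by
  simp only [softmax, ← Finset.sum_div]
  exact div_self (sum_exp_pos y).ne'

lemma log_softmax (y : Fin N → ℝ) (i : Fin N) :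
    log (softmax N y i) = y i - log (∑ j, exp (y j)) := by
  rw [softmax, log_div (exp_ne_zero _) (sum_exp_pos y).ne', log_exp]

variable {y : ℝ → Fin N → ℝ} {y' : Fin N → ℝ} {x : ℝ}

lemma hasDerivAt_log_softmax (hy : HasDerivAt y y' x) (i : Fin N) :
    HasDerivAt (fun t => log (softmax N (y t) i))
      (y' i - ∑ j, softmax N (y x) j * y' j) x := by
  rw [hasDerivAt_pi] at hy
  have hZ : HasDerivAt (fun t => ∑ j, exp (y t j)) (∑ j, exp (y x j) * y' j) x :=
    HasDerivAt.fun_sum fun j _ => (hy j).exp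
  have hmean : ∑ j, softmax N (y x) j * y' j = (∑ j, exp (y x j) * y' j) / ∑ j, exp (y x j) := by
    simp only [softmax, Finset.sum_div, div_mul_eq_mul_div]
  simp only [log_softmax, hmean]
  exact (hy i).fun_sub (hZ.log (sum_exp_pos (y x)).ne')

lemma hasDerivAt_softmax (hy : HasDerivAt y y' x) (i : Fin N) :
    HasDerivAt (fun t => softmax N (y t) i)
      (softmax N (y x) i * (y' i - ∑ j, softmax N (y x) j * y' j)) x := by
  simpa only [exp_log (div_pos (exp_pos _) (sum_exp_pos _)), softmax] using
    (hasDerivAt_log_softmax hy i).exp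

lemma sum_softmax_mul_sub_mean (y y' : Fin N → ℝ) :
    ∑ j, softmax N y j * (y' j - ∑ i, softmax N y i * y' i) = 0 := by
  simp only [mul_sub, Finset.sum_sub_distrib, ← Finset.sum_mul, sum_softmax, one_mul, sub_self]

lemma hasDerivAt_sum_softmax_mul (hy : HasDerivAt y y' x) (g : Fin N → ℝ) :
    HasDerivAt (fun t => ∑ j, softmax N (y t) j * g j)
      (∑ j, softmax N (y x) j * (y' j - ∑ i, softmax N (y x) i * y' i) * g j) x :=
  HasDerivAt.fun_sum fun j _ => (hasDerivAt_softmax hy j).mul_const (g j)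

lemma hasDerivAt_sum_softmax_mul_log_softmax (hy : HasDerivAt y y' x) :
    HasDerivAt (fun t => ∑ j, softmax N (y t) j * log (softmax N (y t) j))
      (∑ j, softmax N (y x) j * (y' j - ∑ i, softmax N (y x) i * y' i)
        * log (softmax N (y x) j)) x := by
  have h := HasDerivAt.fun_sum (u := univ) fun j _ =>
    (hasDerivAt_softmax hy j).mul (hasDerivAt_log_softmax hy j)
  rwa [Finset.sum_add_distrib, sum_softmax_mul_sub_mean, add_zero] at h

end Softmax

lemma sum_mul_single_sub_mul {ι : Type*} [Fintype ι] [DecidableEq ι] (p g : ι → ℝ) (n : ι)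
    (c : ℝ) : ∑ j, p j * ((Pi.single n c : ι → ℝ) j - ∑ i, p i * (Pi.single n c : ι → ℝ) i) * g j
      = c * p n * (g n - ∑ j, p j * g j) := by
  simp only [mul_sub, sub_mul, Finset.sum_sub_distrib, Pi.single_apply, mul_ite, ite_mul,
    mul_zero, zero_mul, Finset.sum_ite_eq', Finset.mem_univ, if_true, Finset.mul_sum]
  ring_nf

lemma hasDerivAt_logits_update {ι κ : Type*} [Fintype κ] [DecidableEq ι] [DecidableEq κ]
    (W : ι → κ → ℝ) (f : κ → ℝ) (n : ι) (d : κ) (x : ℝ) :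
    HasDerivAt (fun t i => ∑ k, Function.update W n (Function.update (W n) d t) i k * f k)
      (Pi.single n (f d)) x := by
  rw [hasDerivAt_pi]
  intro i
  rcases eq_or_ne i n with rfl | hi
  · have := HasDerivAt.fun_sum (u := univ) fun k _ =>
      (hasDerivAt_pi.1 (hasDerivAt_update (W i) d x) k).mul_const (f k)
    simpa [Pi.single_apply] using this
  · simp only [Function.update_of_ne hi, Pi.single_eq_of_ne hi]
    exact hasDerivAt_const _ _

theorem stmt7_general (D N : ℕ) (f : Fin D → ℝ) (W : Fin N → Fin D → ℝ)
    (ptil : Fin N → ℝ)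
    (α β : ℝ) (n : Fin N) (d : Fin D) :
    HasDerivAt
      (fun t : ℝ => D2Loss D N α β f ptil (Function.update W n (Function.update (W n) d t)))
      (((α - β) * Real.log (phat D N f W n) - α * Real.log (ptil n)
          - D2Loss D N α β f ptil W) * phat D N f W n * f d)
      (W n d) := by
  have : NeZero N := ⟨n.pos.ne'⟩
  have hy := hasDerivAt_logits_update W f n d (W n d)
  have hL := ((hasDerivAt_sum_softmax_mul_log_softmax hy).const_mul (α - β)).fun_sub
    ((hasDerivAt_sum_softmax_mul hy fun j => log (ptil j)).const_mul α)
  rw [sum_mul_single_sub_mul, sum_mul_single_sub_mul, Function.update_eq_self,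
    Function.update_eq_self] at hL
  refine hL.congr_deriv ?_
  rw [D2Loss, phat]
  ring

theorem stmt7 (D N : ℕ) (f : Fin D → ℝ) (W : Fin N → Fin D → ℝ)
    (ptil : Fin N → ℝ) (hptil_pos : ∀ j, 0 < ptil j) (hptil_sum : ∑ j, ptil j = 1)
    (α β : ℝ) (hβ : 0 < β) (hαβ : β < α) (n : Fin N) (d : Fin D) :
    HasDerivAt
      (fun t : ℝ => D2Loss D N α β f ptil (Function.update W n (Function.update (W n) d t)))
      (((α - β) * Real.log (phat D N f W n) - α * Real.log (ptil n)
          - D2Loss D N α β f ptil W) * phat D N f W n * f d)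
      (W n d) :=
  stmt7_general D N f W ptil α β n d
end
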